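/- For PSD Hermitian matrices A, B of sizes n×n with B invertible, the limit as P → ∞ of [log det(I + P·A + P·B') − log det(I + P·B)] / log P equals rank(A + B') − rank(B), where B' is PSD. -/

import Mathlib

open Matrix Filter
open scoped ComplexOrder

/-!
Diagonalising the positive semidefinite matrix `M`,
`det (1 + P • M) = ∏ i, (1 + P * λᵢ)` with all `λᵢ ≥ 0`, and `log (1 + P * λ) / log P`
tends to `1` if `λ > 0` and to `0` if `λ = 0`. Hence
`log ‖det (1 + P • M)‖ / log P → rank M`; apply this to `M = A + B'` and `M = B`.
-/

theorem tendsto_log_one_add_mul_div_log_of_pos {c : ℝ} (hc : 0 < c) :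
    Tendsto (fun P : ℝ => Real.log (1 + P * c) / Real.log P) atTop (nhds 1) := by
  have hsplit : ∀ᶠ P in atTop,
      1 + Real.log (P⁻¹ + c) / Real.log P = Real.log (1 + P * c) / Real.log P := by
    filter_upwards [eventually_gt_atTop 1] with P hP
    have hP0 : P ≠ 0 := by positivity
    rw [show 1 + P * c = P * (P⁻¹ + c) by field_simp, Real.log_mul hP0 (by positivity),
      add_div, div_self (Real.log_pos hP).ne']
  have hlog : Tendsto (fun P : ℝ => Real.log (P⁻¹ + c)) atTop (nhds (Real.log c)) := by
    have := tendsto_inv_atTop_zero.add_const c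
    rw [zero_add] at this
    exact (Real.continuousAt_log hc.ne').tendsto.comp this
  simpa using (tendsto_const_nhds.add (hlog.div_atTop Real.tendsto_log_atTop)).congr' hsplit

theorem tendsto_log_one_add_mul_div_log {c : ℝ} (hc : 0 ≤ c) :
    Tendsto (fun P : ℝ => Real.log (1 + P * c) / Real.log P) atTop
      (nhds (if c ≠ 0 then 1 else 0)) := by
  obtain rfl | hc := hc.eq_or_lt
  · simp
  · simpa [hc.ne'] using tendsto_log_one_add_mul_div_log_of_pos hc

namespace Matrix

variable {𝕜 ι : Type*} [RCLike 𝕜] [Fintype ι] [DecidableEq ι] {A : Matrix ι ι 𝕜}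

theorem IsHermitian.det_one_add_smul (hA : A.IsHermitian) (c : 𝕜) :
    (1 + c • A).det = ∏ i, (1 + c * hA.eigenvalues i) := by
  have hdiag : diagonal (fun i => 1 + c * hA.eigenvalues i)
      = 1 + c • diagonal (RCLike.ofReal ∘ hA.eigenvalues) := by
    rw [← diagonal_one, ← diagonal_smul, ← diagonal_add]
    rfl
  have hconj : 1 + c • A = Unitary.conjStarAlgAut 𝕜 _ hA.eigenvectorUnitary
      (diagonal fun i => 1 + c * hA.eigenvalues i) := by
    rw [hdiag, map_add, map_one, map_smul, ← hA.spectral_theorem]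
  rw [hconj, Unitary.conjStarAlgAut_apply, det_mul_comm, ← mul_assoc,
    Unitary.coe_star_mul_self, one_mul, det_diagonal]

theorem PosSemidef.log_norm_det_one_add_smul (hA : A.PosSemidef) {P : ℝ} (hP : 0 ≤ P) :
    Real.log ‖(1 + (P : 𝕜) • A).det‖ =
      ∑ i, Real.log (1 + P * hA.isHermitian.eigenvalues i) := by
  have hpos : ∀ i, 0 < 1 + P * hA.isHermitian.eigenvalues i := fun i =>
    add_pos_of_pos_of_nonneg one_pos (mul_nonneg hP (hA.eigenvalues_nonneg i))
  rw [hA.isHermitian.det_one_add_smul, norm_prod, Real.log_prod fun i _ => (norm_pos_iff.2 ?_).ne']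
  · congr! 2 with i
    rw [← RCLike.ofReal_one, ← RCLike.ofReal_mul, ← RCLike.ofReal_add, RCLike.norm_ofReal,
      abs_of_pos (hpos i)]
  · exact_mod_cast (hpos _).ne'

theorem PosSemidef.tendsto_log_norm_det_one_add_smul_div_log (hA : A.PosSemidef) :
    Tendsto (fun P : ℝ => Real.log ‖(1 + (P : 𝕜) • A).det‖ / Real.log P) atTop
      (nhds A.rank) := by
  have hrank : (A.rank : ℝ) = ∑ i, if hA.isHermitian.eigenvalues i ≠ 0 then 1 else 0 := by
    rw [hA.isHermitian.rank_eq_card_non_zero_eigs, Fintype.card_subtype, Finset.sum_boole]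
  rw [hrank]
  refine (tendsto_finsetSum _ fun i _ =>
    tendsto_log_one_add_mul_div_log (hA.eigenvalues_nonneg i)).congr' ?_
  filter_upwards [eventually_ge_atTop 0] with P hP
  rw [hA.log_norm_det_one_add_smul hP, Finset.sum_div]

end Matrix

theorem prelog_difference_limit_general (n : ℕ) (A B B' : Matrix (Fin n) (Fin n) ℂ)
    (hA : A.PosSemidef) (hB : B.PosSemidef) (hB' : B'.PosSemidef) :
    Tendsto (fun P : ℝ =>
        (Real.log ‖(1 + (P : ℂ) • A + (P : ℂ) • B').det‖
          - Real.log ‖(1 + (P : ℂ) • B).det‖) / Real.log P)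
      atTop (nhds (((A + B').rank : ℝ) - (B.rank : ℝ))) := by
  simp_rw [add_assoc, ← smul_add, sub_div]
  exact ((hA.add hB').tendsto_log_norm_det_one_add_smul_div_log).sub
    hB.tendsto_log_norm_det_one_add_smul_div_log

theorem prelog_difference_limit (n : ℕ) (A B B' : Matrix (Fin n) (Fin n) ℂ)
    (hA : A.PosSemidef) (hB : B.PosSemidef) (hB' : B'.PosSemidef)
    (hBinv : IsUnit B) :
    Tendsto (fun P : ℝ =>
        (Real.log ‖(1 + (P : ℂ) • A + (P : ℂ) • B').det‖
          - Real.log ‖(1 + (P : ℂ) • B).det‖) / Real.log P)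
      atTop (nhds (((A + B').rank : ℝ) - (B.rank : ℝ))) :=
  prelog_difference_limit_general n A B B' hA hB hB'
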